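/- Let s > 2 and let t_1,…,t_s be nonnegative integers with t_1 ≥ 1. The binary code Φ(H^{t_1,…,t_s}) is linear if and only if t_1 = 1, t_i = 0 for all 2 ≤ i ≤ s−2, and t_{s−1} ∈ {0,1}; i.e., the only linear Z_{2^s}-linear Hadamard codes are those of type (1,0,…,0,t_s) and (1,0,…,0,1,t_s) with t_s ≥ 0. -/

import Mathlib

/-- The `i`-th digit of the binary expansion of `u : ZMod (2^s)`. -/
def gdigit (s : ℕ) (u : ZMod (2^s)) (i : ℕ) : ZMod 2 :=
  if (ZMod.val u).testBit i then 1 else 0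

/-- Carlet's generalized Gray map `φ : ZMod (2^s) → (Z_2^{s-1} → Z_2)`:
the coordinate indexed by `y ∈ Z_2^{s-1}` is `u_{s-1} + ∑ u_i y_i`. -/
def gray (s : ℕ) (u : ZMod (2^s)) : (Fin (s - 1) → ZMod 2) → ZMod 2 :=
  fun y => gdigit s u (s - 1) + ∑ i : Fin (s - 1), gdigit s u (i : ℕ) * y i

/-- The coordinatewise extension `Φ` of the Gray map, on vectors indexed by `ι`. -/
def PhiMap {ι : Type} (s : ℕ) (u : ι → ZMod (2^s)) :
    ι × (Fin (s - 1) → ZMod 2) → ZMod 2 :=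
  fun p => gray s (u p.1) p.2

/-- A binary code is linear if it is closed under addition. -/
def IsLinearCode {V : Type} [Add V] (C : Set V) : Prop :=
  ∀ x ∈ C, ∀ y ∈ C, x + y ∈ C

/-- `τ = t_1 + ⋯ + t_s`, the number of rows of the generator matrix. -/
def tauSum (s : ℕ) (t : ℕ → ℕ) : ℕ := ∑ i ∈ Finset.Icc 1 s, t i

/-- `T_i = {j·2^{i-1} : 0 ≤ j ≤ 2^{s-i+1}-1} ⊆ ZMod (2^s)` (here `i` is 1-based). -/
def Tset (s i : ℕ) : Set (ZMod (2^s)) :=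
  {x | ∃ j : ℕ, j < 2 ^ (s - i + 1) ∧ x = (j : ZMod (2^s)) * 2 ^ (i - 1)}

/-- The block (1-based) containing the 1-based row position `p`:
the least `i ≥ 1` with `p ≤ t_1 + ⋯ + t_i`. -/
noncomputable def blockIdx (t : ℕ → ℕ) (p : ℕ) : ℕ :=
  sInf {i : ℕ | 1 ≤ i ∧ p ≤ ∑ j ∈ Finset.Icc 1 i, t j}

/-- A column of the generator matrix `A^{t_1,…,t_s}`: an element of
`{1} × T_1^{t_1-1} × T_2^{t_2} × ⋯ × T_s^{t_s}`. -/
def IsHadCol (s : ℕ) (t : ℕ → ℕ) (z : Fin (tauSum s t) → ZMod (2^s)) : Prop :=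
  (∀ q : Fin (tauSum s t), (q : ℕ) = 0 → z q = 1) ∧
  (∀ q : Fin (tauSum s t), 1 ≤ (q : ℕ) → z q ∈ Tset s (blockIdx t ((q : ℕ) + 1)))

/-- The type indexing the columns of `A^{t_1,…,t_s}` (hence the coordinates of the code). -/
abbrev ColIdx (s : ℕ) (t : ℕ → ℕ) : Type :=
  {z : Fin (tauSum s t) → ZMod (2^s) // IsHadCol s t z}

noncomputable instance (s : ℕ) (t : ℕ → ℕ) : Fintype (ColIdx s t) :=
  Fintype.ofFinite _

/-- The `Z_{2^s}`-additive Hadamard code `H^{t_1,…,t_s}`: the subgroup generated by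
the rows of `A^{t_1,…,t_s}` (row `q` sends the column `z` to its `q`-th entry). -/
def hadamardCode (s : ℕ) (t : ℕ → ℕ) : AddSubgroup (ColIdx s t → ZMod (2^s)) :=
  AddSubgroup.closure (Set.range (fun (q : Fin (tauSum s t)) => fun z : ColIdx s t => z.val q))

/-!
The Gray map is linear in the binary digits and injective, so it turns the bitwise xor of
`Z_{2^s}` into addition, and `Φ(H)` is linear iff `H` is closed under coordinatewise xor. The
codewords of `H` are the maps `z ↦ a ⬝ᵥ z` on the columns `z`.

If a block `T_i` with `i ≤ s - 2` holds a row other than the all-one row, then on the three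
columns with entries `0, p, 2p` in that row (`p = 2^{i-1}`) and `0` elsewhere, the xor of two
codewords takes the values `p, 3p, p`; an affine function of the entry cannot, since `4p ≠ 0`.
Two rows in `T_{s-1}` give, in the same way, the contradiction `2^{s-1} = 0`.

Conversely, for the types `(1, 0, …, 0, t_{s-1}, t_s)` with `t_{s-1} ≤ 1` a codeword is
`α + d x + e` with `x ∈ 2^{s-2} Z_{2^s}` the entry of the column in the row of `T_{s-1}` and
`e ∈ 2^{s-1} Z_{2^s}`. Xor commutes with adding multiples of `2^{s-1}`, it acts separately on
the digits below `2^{s-2}` and on the two digits above, and on these the xor of two affine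
functions of `x` is again affine, by a finite check in `Z_4`.
-/

open Finset

namespace Nat

lemma two_pow_mul_add_xor {k m m' l l' : ℕ} (hl : l < 2 ^ k) (hl' : l' < 2 ^ k) :
    (2 ^ k * m + l) ^^^ (2 ^ k * m' + l') = 2 ^ k * (m ^^^ m') + (l ^^^ l') := by
  refine eq_of_testBit_eq fun i => ?_
  rw [testBit_xor, testBit_two_pow_mul_add _ hl, testBit_two_pow_mul_add _ hl',
    testBit_two_pow_mul_add _ (xor_lt_two_pow hl hl'), testBit_xor, testBit_xor]
  split_ifs <;> rfl

lemma two_pow_mul_add_lt {k n m l : ℕ} (hm : m < 2 ^ n) (hl : l < 2 ^ k) :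
    2 ^ k * m + l < 2 ^ (k + n) :=
  calc 2 ^ k * m + l < 2 ^ k * (m + 1) := by rw [mul_add]; omega
    _ ≤ 2 ^ k * 2 ^ n := Nat.mul_le_mul_left _ hm
    _ = 2 ^ (k + n) := (pow_add 2 k n).symm

lemma two_pow_mul_lt_two_pow {k n m s : ℕ} (hm : m < 2 ^ n) (h : k + n ≤ s) :
    2 ^ k * m < 2 ^ s :=
  ((Nat.mul_lt_mul_left (Nat.two_pow_pos k)).2 hm).trans_le
    (by rw [← pow_add]; exact Nat.pow_le_pow_right two_pos h)

lemma two_pow_mul_mod_add_mod_modEq (a b k n : ℕ) :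
    2 ^ k * ((a / 2 ^ k + b) % 2 ^ n) + a % 2 ^ k ≡ a + 2 ^ k * b [MOD 2 ^ (k + n)] := by
  have := div_add_mod a (2 ^ k)
  rw [show a + 2 ^ k * b = 2 ^ k * (a / 2 ^ k + b) + a % 2 ^ k by rw [mul_add]; omega, pow_add]
  exact ((mod_modEq _ _).mul_left' _).add_right _

lemma two_pow_mul_xor_mod_two_modEq (k a b x y : ℕ) :
    2 ^ k * ((a + x) % 2 ^^^ (b + y) % 2) ≡
      2 ^ k * (a % 2 ^^^ b % 2) + 2 ^ k * x + 2 ^ k * y [MOD 2 ^ (k + 1)] := by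
  rw [pow_succ, ← mul_add, ← mul_add]
  refine Nat.ModEq.mul_left' _ ?_
  have h₁ := xor_mod_two_eq (m := (a + x) % 2) (n := (b + y) % 2)
  have h₂ := xor_mod_two_eq (m := a % 2) (n := b % 2)
  unfold Nat.ModEq
  omega

lemma exists_xor_mod_four_eq : ∀ a < 4, ∀ b < 4, ∀ d < 4, ∀ e < 4, ∃ g < 4, ∃ f < 4,
    ∀ j < 4, (a + d * j) % 4 ^^^ (b + e * j) % 4 = (g + f * j) % 4 := by
  decide

lemma two_pow_mul_mod_four_modEq {k : ℕ} (g f y : ℕ) :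
    2 ^ k * ((g + f * (y % 4)) % 4) ≡ 2 ^ k * (g + f * y) [MOD 2 ^ (k + 2)] := by
  rw [pow_add]
  exact ((mod_modEq _ 4).trans (((mod_modEq y 4).mul_left f).add_left g)).mul_left' _

end Nat

section Xor

variable {s : ℕ}

def zxor (u v : ZMod (2 ^ s)) : ZMod (2 ^ s) := ((u.val ^^^ v.val : ℕ) : ZMod (2 ^ s))

lemma val_zxor (u v : ZMod (2 ^ s)) : (zxor u v).val = u.val ^^^ v.val :=
  ZMod.val_cast_of_lt (Nat.xor_lt_two_pow u.val_lt v.val_lt)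

lemma zxor_natCast {m n : ℕ} (hm : m < 2 ^ s) (hn : n < 2 ^ s) :
    zxor (m : ZMod (2 ^ s)) n = ((m ^^^ n : ℕ) : ZMod (2 ^ s)) := by
  rw [zxor, ZMod.val_cast_of_lt hm, ZMod.val_cast_of_lt hn]

lemma zxor_natCast_two_pow_mul_add {k n m m' l l' : ℕ} (hs : s = k + n)
    (hm : m < 2 ^ n) (hm' : m' < 2 ^ n) (hl : l < 2 ^ k) (hl' : l' < 2 ^ k) :
    zxor ((2 ^ k * m + l : ℕ) : ZMod (2 ^ s)) ((2 ^ k * m' + l' : ℕ) : ZMod (2 ^ s)) =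
      ((2 ^ k * (m ^^^ m') + (l ^^^ l') : ℕ) : ZMod (2 ^ s)) := by
  subst hs
  rw [zxor_natCast (Nat.two_pow_mul_add_lt hm hl) (Nat.two_pow_mul_add_lt hm' hl'),
    Nat.two_pow_mul_add_xor hl hl']

lemma add_two_pow_mul_eq {k n : ℕ} (hs : s = k + n) (u w : ZMod (2 ^ s)) :
    u + 2 ^ k * w =
      ((2 ^ k * ((u.val / 2 ^ k + w.val) % 2 ^ n) + u.val % 2 ^ k : ℕ) : ZMod (2 ^ s)) := by
  rw [(ZMod.natCast_eq_natCast_iff _ _ _).2 (hs ▸ Nat.two_pow_mul_mod_add_mod_modEq _ _ _ _)]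
  push_cast
  simp only [ZMod.natCast_zmod_val]

lemma zxor_add_two_pow_mul {k n : ℕ} (hs : s = k + n) (u v w w' : ZMod (2 ^ s)) :
    zxor (u + 2 ^ k * w) (v + 2 ^ k * w') =
      ((2 ^ k * (((u.val / 2 ^ k + w.val) % 2 ^ n) ^^^ ((v.val / 2 ^ k + w'.val) % 2 ^ n))
        + (u.val % 2 ^ k ^^^ v.val % 2 ^ k) : ℕ) : ZMod (2 ^ s)) := by
  have hk : 0 < 2 ^ k := by positivity
  rw [add_two_pow_mul_eq hs, add_two_pow_mul_eq hs, zxor_natCast_two_pow_mul_add hs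
    (Nat.mod_lt _ (by positivity)) (Nat.mod_lt _ (by positivity)) (Nat.mod_lt _ hk)
    (Nat.mod_lt _ hk)]

lemma zxor_add_add_of_dvd {k : ℕ} (hs : s = k + 1) {u v e e' : ZMod (2 ^ s)}
    (he : 2 ^ k ∣ e) (he' : 2 ^ k ∣ e') : zxor (u + e) (v + e') = zxor u v + e + e' := by
  obtain ⟨w, rfl⟩ := he
  obtain ⟨w', rfl⟩ := he'
  have h := zxor_add_two_pow_mul hs u v 0 0
  simp only [mul_zero, add_zero, ZMod.val_zero] at h
  have hmod := Nat.two_pow_mul_xor_mod_two_modEq k (u.val / 2 ^ k) (v.val / 2 ^ k) w.val w'.val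
  rw [← hs, ← ZMod.natCast_eq_natCast_iff] at hmod
  rw [zxor_add_two_pow_mul hs, h]
  push_cast at hmod ⊢
  simp only [ZMod.natCast_zmod_val] at hmod ⊢
  linear_combination hmod

lemma exists_zxor_add_mul_eq {k : ℕ} (hs : s = k + 2) (α β d d' : ZMod (2 ^ s)) :
    ∃ γ δ : ZMod (2 ^ s), ∀ x, 2 ^ k ∣ x → zxor (α + d * x) (β + d' * x) = γ + δ * x := by
  have h4 : 4 ∣ 2 ^ s := hs ▸ ⟨2 ^ k, by ring⟩
  obtain ⟨g, -, f, -, hgf⟩ := Nat.exists_xor_mod_four_eq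
    _ (Nat.mod_lt (α.val / 2 ^ k) four_pos) _ (Nat.mod_lt (β.val / 2 ^ k) four_pos)
    _ (Nat.mod_lt d.val four_pos) _ (Nat.mod_lt d'.val four_pos)
  refine ⟨((2 ^ k * g + (α.val % 2 ^ k ^^^ β.val % 2 ^ k) : ℕ) : ZMod (2 ^ s)), f, ?_⟩
  rintro _ ⟨y, rfl⟩
  have hdigits (a e : ZMod (2 ^ s)) : (a.val / 2 ^ k + (e * y).val) % 2 ^ 2 =
      (a.val / 2 ^ k % 4 + e.val % 4 * (y.val % 4)) % 4 := by
    rw [show (2 : ℕ) ^ 2 = 4 by norm_num, ZMod.val_mul, Nat.add_mod, Nat.mod_mod_of_dvd _ h4,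
      Nat.mul_mod, Nat.add_mod_mod]
  rw [show α + d * (2 ^ k * y) = α + 2 ^ k * (d * y) by ring,
    show β + d' * (2 ^ k * y) = β + 2 ^ k * (d' * y) by ring, zxor_add_two_pow_mul hs,
    hdigits, hdigits, hgf _ (Nat.mod_lt _ four_pos)]
  have hmod := Nat.two_pow_mul_mod_four_modEq (k := k) g f y.val
  rw [← hs, ← ZMod.natCast_eq_natCast_iff] at hmod
  push_cast at hmod ⊢
  rw [hmod, ZMod.natCast_zmod_val]
  ring

lemma zxor_two_pow_mul_natCast {k m n : ℕ} (hm : 2 ^ k * m < 2 ^ s) (hn : 2 ^ k * n < 2 ^ s) :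
    zxor ((2 : ZMod (2 ^ s)) ^ k * (m : ZMod (2 ^ s))) (2 ^ k * (n : ZMod (2 ^ s))) =
      2 ^ k * ((m ^^^ n : ℕ) : ZMod (2 ^ s)) := by
  have hxor : 2 ^ k * m ^^^ 2 ^ k * n = 2 ^ k * (m ^^^ n) := by
    simpa using
      Nat.two_pow_mul_add_xor (m := m) (m' := n) (Nat.two_pow_pos k) (Nat.two_pow_pos k)
  have h := zxor_natCast hm hn
  rw [hxor] at h
  push_cast at h
  exact h

lemma two_pow_mul_natCast_ne_zero {k m : ℕ} (hm : 0 < m) (h : 2 ^ k * m < 2 ^ s) :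
    (2 : ZMod (2 ^ s)) ^ k * (m : ZMod (2 ^ s)) ≠ 0 := by
  have : ((2 ^ k * m : ℕ) : ZMod (2 ^ s)) ≠ 0 := by
    rw [Ne, ZMod.natCast_eq_zero_iff]
    exact Nat.not_dvd_of_pos_of_lt (by positivity) h
  exact_mod_cast this

end Xor

section Gray

variable {s : ℕ}

lemma gdigit_zxor (u v : ZMod (2 ^ s)) (i : ℕ) :
    gdigit s (zxor u v) i = gdigit s u i + gdigit s v i := by
  unfold gdigit
  rw [val_zxor, Nat.testBit_xor]
  cases u.val.testBit i <;> cases v.val.testBit i <;> decide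

lemma gdigit_eq_gdigit_iff {u v : ZMod (2 ^ s)} {i : ℕ} :
    gdigit s u i = gdigit s v i ↔ u.val.testBit i = v.val.testBit i := by
  unfold gdigit
  cases u.val.testBit i <;> cases v.val.testBit i <;> decide

lemma gray_zxor (u v : ZMod (2 ^ s)) : gray s (zxor u v) = gray s u + gray s v := by
  funext y
  simp only [gray, gdigit_zxor, Pi.add_apply, add_mul, sum_add_distrib]
  ring

lemma gray_injective (hs : 1 ≤ s) : Function.Injective (gray s) := by
  intro u v h
  have htop : gdigit s u (s - 1) = gdigit s v (s - 1) := by simpa [gray] using congrFun h 0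
  have hlow (i : Fin (s - 1)) : gdigit s u i = gdigit s v i := by
    simpa [gray, htop, Pi.single_apply] using congrFun h (Pi.single i 1)
  refine ZMod.val_injective _ (Nat.eq_of_testBit_eq fun i => ?_)
  rcases lt_trichotomy i (s - 1) with hi | rfl | hi
  · exact gdigit_eq_gdigit_iff.1 (hlow ⟨i, hi⟩)
  · exact gdigit_eq_gdigit_iff.1 htop
  · have hle : 2 ^ s ≤ 2 ^ i := Nat.pow_le_pow_right two_pos (by omega)
    rw [Nat.testBit_lt_two_pow (u.val_lt.trans_le hle),
      Nat.testBit_lt_two_pow (v.val_lt.trans_le hle)]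

lemma PhiMap_zxor {ι : Type} (x y : ι → ZMod (2 ^ s)) :
    PhiMap s (fun i => zxor (x i) (y i)) = PhiMap s x + PhiMap s y :=
  funext fun p => congrFun (gray_zxor (x p.1) (y p.1)) p.2

lemma PhiMap_injective {ι : Type} (hs : 1 ≤ s) : Function.Injective (PhiMap (ι := ι) s) :=
  fun _ _ h => funext fun i => gray_injective hs (funext fun y' => congrFun h (i, y'))

lemma isLinearCode_image_PhiMap_iff {ι : Type} (hs : 1 ≤ s) (C : Set (ι → ZMod (2 ^ s))) :
    IsLinearCode (PhiMap s '' C) ↔ ∀ x ∈ C, ∀ y ∈ C, (fun i => zxor (x i) (y i)) ∈ C := by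
  constructor
  · rintro h x hx y hy
    obtain ⟨w, hw, hwxy⟩ := h _ ⟨x, hx, rfl⟩ _ ⟨y, hy, rfl⟩
    rw [← PhiMap_zxor, (PhiMap_injective hs).eq_iff] at hwxy
    exact hwxy ▸ hw
  · rintro h _ ⟨x, hx, rfl⟩ _ ⟨y, hy, rfl⟩
    exact ⟨_, h x hx y hy, PhiMap_zxor x y⟩

end Gray

def IsXorClosed {σ : Type*} [Fintype σ] {s : ℕ} (Z : Set (σ → ZMod (2 ^ s))) : Prop :=
  ∀ a b : σ → ZMod (2 ^ s), ∃ c : σ → ZMod (2 ^ s), ∀ z ∈ Z, zxor (a ⬝ᵥ z) (b ⬝ᵥ z) = c ⬝ᵥ z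

lemma dvd_single_apply {σ R : Type*} [DecidableEq σ] [CommMonoidWithZero R] {d : σ → R}
    {q : σ} {x : R} (hx : d q ∣ x) (q' : σ) : d q' ∣ (Pi.single q x : σ → R) q' := by
  rcases eq_or_ne q' q with rfl | h
  · simpa using hx
  · simp [h]

section XorClosed

variable {σ : Type*} [Fintype σ] [DecidableEq σ] {s : ℕ} {Z : Set (σ → ZMod (2 ^ s))}

lemma not_isXorClosed_of_forall_lt_three {q₀ q : σ} (hq : q₀ ≠ q) {k : ℕ} (hk : k + 2 < s)
    (hZ : ∀ j : ℕ, j < 3 → Pi.single q₀ 1 + Pi.single q (2 ^ k * (j : ZMod (2 ^ s))) ∈ Z) :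
    ¬ IsXorClosed Z := by
  intro h
  obtain ⟨c, hc⟩ := h (Pi.single q 1) (Pi.single q₀ (2 ^ k) + Pi.single q 1)
  have hlt (m : ℕ) (hm : m ≤ 3) : 2 ^ k * m < 2 ^ s :=
    Nat.two_pow_mul_lt_two_pow (n := 2) (by omega) (by omega)
  have hval (j m : ℕ) (hj : j < 3) (hm : j ^^^ (j + 1) = m) :
      2 ^ k * (m : ZMod (2 ^ s)) = c q₀ + c q * (2 ^ k * (j : ZMod (2 ^ s))) := by
    have hj' : zxor (2 ^ k * (j : ZMod (2 ^ s))) (2 ^ k + 2 ^ k * (j : ZMod (2 ^ s))) =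
        c q₀ + c q * (2 ^ k * (j : ZMod (2 ^ s))) := by
      simpa [dotProduct_add, hq, hq.symm] using hc _ (hZ j hj)
    rw [← hm, ← hj', show (2 : ZMod (2 ^ s)) ^ k + 2 ^ k * j = 2 ^ k * ((j + 1 : ℕ) : ZMod (2 ^ s))
      by push_cast; ring, zxor_two_pow_mul_natCast (hlt j (by omega)) (hlt (j + 1) (by omega))]
  have h₀ := hval 0 1 (by norm_num) (by decide)
  have h₁ := hval 1 3 (by norm_num) (by decide)
  have h₂ := hval 2 1 (by norm_num) (by decide)
  push_cast at h₀ h₁ h₂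
  refine two_pow_mul_natCast_ne_zero (s := s) (k := k) (m := 4) (by norm_num)
    (Nat.two_pow_mul_lt_two_pow (k := k) (m := 4) (n := 3) (by norm_num) (by omega)) ?_
  push_cast
  linear_combination 2 * h₁ - h₀ - h₂

/-- On the columns `e₀ + 2^k (j e₁ + j' e₂)` (`j, j' ∈ {0, 1}`) the xor of the codewords
`e₁ + e₂` and `e₁` takes the values `0, 0, 2^k, 3·2^k`, which no affine function of `(j, j')`
does unless `2·2^k = 0`. -/
lemma not_isXorClosed_of_forall_lt_two {q₀ q₁ q₂ : σ} (h₀₁ : q₀ ≠ q₁) (h₀₂ : q₀ ≠ q₂)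
    (h₁₂ : q₁ ≠ q₂) {k : ℕ} (hk : k + 2 ≤ s)
    (hZ : ∀ j j' : ℕ, j < 2 → j' < 2 → Pi.single q₀ 1 + (Pi.single q₁ (2 ^ k * (j : ZMod (2 ^ s)))
      + Pi.single q₂ (2 ^ k * (j' : ZMod (2 ^ s)))) ∈ Z) :
    ¬ IsXorClosed Z := by
  intro h
  obtain ⟨c, hc⟩ := h (Pi.single q₁ 1 + Pi.single q₂ 1) (Pi.single q₁ 1)
  have hlt (m : ℕ) (hm : m ≤ 3) : 2 ^ k * m < 2 ^ s :=
    Nat.two_pow_mul_lt_two_pow (n := 2) (by omega) (by omega)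
  have hval (j j' m : ℕ) (hj : j < 2) (hj' : j' < 2) (hm : (j + j') ^^^ j = m) :
      2 ^ k * (m : ZMod (2 ^ s)) = c q₀ + c q₁ * (2 ^ k * (j : ZMod (2 ^ s))) +
        c q₂ * (2 ^ k * (j' : ZMod (2 ^ s))) := by
    have hjj' : zxor (2 ^ k * (j : ZMod (2 ^ s)) + 2 ^ k * (j' : ZMod (2 ^ s)))
        (2 ^ k * (j : ZMod (2 ^ s))) = c q₀ + c q₁ * (2 ^ k * (j : ZMod (2 ^ s))) +
          c q₂ * (2 ^ k * (j' : ZMod (2 ^ s))) := by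
      simpa [dotProduct_add, h₀₁, h₀₂, h₁₂, h₁₂.symm, add_assoc] using hc _ (hZ j j' hj hj')
    rw [← hm, ← hjj', show (2 : ZMod (2 ^ s)) ^ k * j + 2 ^ k * j' =
      2 ^ k * ((j + j' : ℕ) : ZMod (2 ^ s)) by push_cast; ring,
      zxor_two_pow_mul_natCast (hlt _ (by omega)) (hlt j (by omega))]
  have hv₀₀ := hval 0 0 0 (by norm_num) (by norm_num) (by decide)
  have hv₁₀ := hval 1 0 0 (by norm_num) (by norm_num) (by decide)
  have hv₀₁ := hval 0 1 1 (by norm_num) (by norm_num) (by decide)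
  have hv₁₁ := hval 1 1 3 (by norm_num) (by norm_num) (by decide)
  push_cast at hv₀₀ hv₁₀ hv₀₁ hv₁₁
  refine two_pow_mul_natCast_ne_zero (s := s) (k := k) (m := 2) (by norm_num)
    (Nat.two_pow_mul_lt_two_pow (k := k) (m := 2) (n := 2) (by norm_num) hk) ?_
  push_cast
  linear_combination hv₁₁ - hv₁₀ - hv₀₁ + hv₀₀

lemma isXorClosed_of_forall_dvd {k : ℕ} (hs : s = k + 1) (S : Finset σ)
    (hZ : ∀ z ∈ Z, ∀ q ∉ S, 2 ^ k ∣ z q)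
    (hS : ∀ a b : σ → ZMod (2 ^ s), ∃ c : σ → ZMod (2 ^ s), ∀ z ∈ Z,
      zxor (∑ q ∈ S, a q * z q) (∑ q ∈ S, b q * z q) = ∑ q ∈ S, c q * z q) :
    IsXorClosed Z := by
  intro a b
  obtain ⟨c, hc⟩ := hS a b
  refine ⟨fun q => if q ∈ S then c q else a q + b q, fun z hz => ?_⟩
  have hdvd (f : σ → ZMod (2 ^ s)) : 2 ^ k ∣ ∑ q ∈ Sᶜ, f q * z q :=
    dvd_sum fun q hq => (hZ z hz q (mem_compl.1 hq)).mul_left _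
  have hcS : ∑ q ∈ S, (if q ∈ S then c q else a q + b q) * z q = ∑ q ∈ S, c q * z q :=
    sum_congr rfl fun q hq => by rw [if_pos hq]
  have hcSc : ∑ q ∈ Sᶜ, (if q ∈ S then c q else a q + b q) * z q =
      ∑ q ∈ Sᶜ, a q * z q + ∑ q ∈ Sᶜ, b q * z q := by
    rw [← sum_add_distrib]
    exact sum_congr rfl fun q hq => by rw [if_neg (mem_compl.1 hq), add_mul]
  simp only [dotProduct, ← sum_add_sum_compl S]
  rw [zxor_add_add_of_dvd hs (hdvd a) (hdvd b), hc z hz, hcS, hcSc, add_assoc]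

end XorClosed

section HadamardCode

variable {s : ℕ} {t : ℕ → ℕ}

lemma mem_hadamardCode_iff {x : ColIdx s t → ZMod (2 ^ s)} :
    x ∈ hadamardCode s t ↔
      ∃ a : Fin (tauSum s t) → ZMod (2 ^ s), (fun z => a ⬝ᵥ z.val) = x := by
  rw [hadamardCode, ← Submodule.span_int_eq_addSubgroupClosure, Submodule.mem_toAddSubgroup,
    ← Submodule.restrictScalars_span ℤ (ZMod (2 ^ s)) ZMod.intCast_surjective,
    Submodule.restrictScalars_mem, Submodule.mem_span_range_iff_exists_fun]
  refine exists_congr fun a => ?_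
  rw [funext_iff, funext_iff]
  refine forall_congr' fun z => ?_
  simp [dotProduct]

lemma isLinearCode_hadamardCode_iff (hs : 1 ≤ s) :
    IsLinearCode (PhiMap s '' (hadamardCode s t : Set (ColIdx s t → ZMod (2 ^ s)))) ↔
      IsXorClosed {z | IsHadCol s t z} := by
  simp only [isLinearCode_image_PhiMap_iff hs, SetLike.mem_coe, mem_hadamardCode_iff]
  constructor
  · intro h a b
    obtain ⟨c, hc⟩ := h _ ⟨a, rfl⟩ _ ⟨b, rfl⟩
    exact ⟨c, fun z hz => (congrFun hc ⟨z, hz⟩).symm⟩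
  · rintro h _ ⟨a, rfl⟩ _ ⟨b, rfl⟩
    obtain ⟨c, hc⟩ := h a b
    exact ⟨c, funext fun z => (hc z.1 z.2).symm⟩

lemma mem_Tset_iff {i : ℕ} {x : ZMod (2 ^ s)} : x ∈ Tset s i ↔ 2 ^ (i - 1) ∣ x := by
  constructor
  · rintro ⟨j, -, rfl⟩
    exact Dvd.intro_left _ rfl
  · rintro ⟨y, rfl⟩
    refine ⟨y.val % 2 ^ (s - i + 1), Nat.mod_lt _ (by positivity), ?_⟩
    have hdvd : 2 ^ s ∣ 2 ^ (s - i + 1) * 2 ^ (i - 1) := by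
      rw [← pow_add]; exact pow_dvd_pow 2 (by omega)
    have hmod := (((Nat.mod_modEq y.val (2 ^ (s - i + 1))).mul_right' (2 ^ (i - 1))).of_dvd hdvd)
    rw [← ZMod.natCast_eq_natCast_iff] at hmod
    push_cast at hmod
    rw [hmod, ZMod.natCast_zmod_val, mul_comm]

lemma blockIdx_eq {i p : ℕ} (hi : 1 ≤ i) (hlt : ∑ j ∈ Icc 1 (i - 1), t j < p)
    (hle : p ≤ ∑ j ∈ Icc 1 i, t j) : blockIdx t p = i := by
  refine le_antisymm (Nat.sInf_le ⟨hi, hle⟩) (le_csInf ⟨i, hi, hle⟩ ?_)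
  rintro j ⟨-, hj⟩
  by_contra! hji
  have := sum_le_sum_of_subset (f := t) (Icc_subset_Icc_right (a := 1) (Nat.le_sub_one_of_lt hji))
  omega

lemma sum_Icc_sub_one_add {i : ℕ} (hi : 1 ≤ i) :
    ∑ j ∈ Icc 1 (i - 1), t j + t i = ∑ j ∈ Icc 1 i, t j := by
  obtain ⟨i, rfl⟩ := Nat.exists_eq_add_of_le' hi
  rw [Nat.add_sub_cancel, Finset.sum_Icc_succ_top (by omega)]

lemma sum_Icc_le_tauSum {i : ℕ} (hi : i ≤ s) : ∑ j ∈ Icc 1 i, t j ≤ tauSum s t :=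
  sum_le_sum_of_subset (Icc_subset_Icc_right hi)

lemma IsHadCol.apply_zero [NeZero (tauSum s t)] {z : Fin (tauSum s t) → ZMod (2 ^ s)}
    (hz : IsHadCol s t z) : z 0 = 1 :=
  hz.1 0 (Fin.val_zero _)

lemma IsHadCol.pow_dvd {z : Fin (tauSum s t) → ZMod (2 ^ s)} (hz : IsHadCol s t z)
    {q : Fin (tauSum s t)} (hq : 1 ≤ (q : ℕ)) : 2 ^ (blockIdx t (q + 1) - 1) ∣ z q :=
  mem_Tset_iff.1 (hz.2 q hq)

lemma isHadCol_single_add [NeZero (tauSum s t)] {v : Fin (tauSum s t) → ZMod (2 ^ s)}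
    (h0 : v 0 = 0) (hv : ∀ q : Fin (tauSum s t), 2 ^ (blockIdx t (q + 1) - 1) ∣ v q) :
    IsHadCol s t (Pi.single 0 1 + v) := by
  refine ⟨fun q hq => ?_, fun q hq => mem_Tset_iff.2 ?_⟩
  · obtain rfl : q = 0 := Fin.ext hq
    simp [h0]
  · have hq0 : q ≠ 0 := fun h => by simp [h] at hq
    simpa [Pi.single_apply, hq0] using hv q

lemma not_isXorClosed_isHadCol_of_le {i : ℕ} (hi : 1 ≤ i) (his : i + 1 < s) (hti : 1 ≤ t i)
    (h2 : 2 ≤ ∑ j ∈ Icc 1 i, t j) : ¬ IsXorClosed {z | IsHadCol s t z} := by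
  have hτ := sum_Icc_le_tauSum (t := t) (show i ≤ s by omega)
  have hsum := sum_Icc_sub_one_add (t := t) hi
  have : NeZero (tauSum s t) := ⟨by omega⟩
  let q : Fin (tauSum s t) := ⟨∑ j ∈ Icc 1 i, t j - 1, by omega⟩
  have hq : (0 : Fin (tauSum s t)) ≠ q := by simp [Fin.ext_iff, q]; omega
  have hblock : blockIdx t (q + 1) = i := blockIdx_eq hi (by simp [q]; omega) (by simp [q]; omega)
  refine not_isXorClosed_of_forall_lt_three hq (k := i - 1) (by omega) fun j _ =>
    isHadCol_single_add (Pi.single_eq_of_ne hq _) (dvd_single_apply ?_)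
  rw [hblock]
  exact dvd_mul_right _ _

lemma not_isXorClosed_isHadCol_of_two_le (hs : 2 < s) (ht : 1 ≤ t 1) (hts : 2 ≤ t (s - 1)) :
    ¬ IsXorClosed {z | IsHadCol s t z} := by
  have hτ := sum_Icc_le_tauSum (t := t) (show s - 1 ≤ s by omega)
  have hsum := sum_Icc_sub_one_add (t := t) (show 1 ≤ s - 1 by omega)
  have h1 : t 1 ≤ ∑ j ∈ Icc 1 (s - 1 - 1), t j :=
    single_le_sum (fun _ _ => Nat.zero_le _) (mem_Icc.2 ⟨le_rfl, by omega⟩)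
  have : NeZero (tauSum s t) := ⟨by omega⟩
  let q₁ : Fin (tauSum s t) := ⟨∑ j ∈ Icc 1 (s - 1), t j - 2, by omega⟩
  let q₂ : Fin (tauSum s t) := ⟨∑ j ∈ Icc 1 (s - 1), t j - 1, by omega⟩
  have h₀₁ : (0 : Fin (tauSum s t)) ≠ q₁ := by simp [Fin.ext_iff, q₁]; omega
  have h₀₂ : (0 : Fin (tauSum s t)) ≠ q₂ := by simp [Fin.ext_iff, q₂]; omega
  have h₁₂ : q₁ ≠ q₂ := by simp [Fin.ext_iff, q₁, q₂]; omega
  have hblock₁ : blockIdx t (q₁ + 1) = s - 1 :=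
    blockIdx_eq (by omega) (by simp [q₁]; omega) (by simp [q₁]; omega)
  have hblock₂ : blockIdx t (q₂ + 1) = s - 1 :=
    blockIdx_eq (by omega) (by simp [q₂]; omega) (by simp [q₂]; omega)
  have hdvd (q : Fin (tauSum s t)) (hq : blockIdx t (q + 1) = s - 1) (j : ℕ) :
      (2 : ZMod (2 ^ s)) ^ (blockIdx t (q + 1) - 1) ∣ 2 ^ (s - 2) * j := by
    rw [hq, show s - 1 - 1 = s - 2 by omega]
    exact dvd_mul_right _ _
  refine not_isXorClosed_of_forall_lt_two h₀₁ h₀₂ h₁₂ (k := s - 2) (by omega) fun j j' _ _ =>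
    isHadCol_single_add (by simp [Pi.single_eq_of_ne h₀₁, Pi.single_eq_of_ne h₀₂]) fun q => ?_
  let d (q : Fin (tauSum s t)) : ZMod (2 ^ s) := 2 ^ (blockIdx t (q + 1) - 1)
  exact dvd_add (dvd_single_apply (d := d) (hdvd q₁ hblock₁ j) q)
    (dvd_single_apply (d := d) (hdvd q₂ hblock₂ j') q)

lemma isXorClosed_isHadCol (hs : 2 < s) (h1 : t 1 = 1)
    (hmid : ∀ i, 2 ≤ i → i ≤ s - 2 → t i = 0) (hlast : t (s - 1) ≤ 1) :
    IsXorClosed {z | IsHadCol s t z} := by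
  have hS₂ : ∑ j ∈ Icc 1 (s - 2), t j = 1 := by
    rw [sum_eq_single_of_mem 1 (mem_Icc.2 ⟨le_rfl, by omega⟩) fun i hi hi1 =>
      hmid i (by have := (mem_Icc.1 hi).1; omega) (mem_Icc.1 hi).2, h1]
  have hS₁ : ∑ j ∈ Icc 1 (s - 1), t j = 1 + t (s - 1) := by
    rw [← sum_Icc_sub_one_add (by omega), show s - 1 - 1 = s - 2 by omega, hS₂]
  have hτ := sum_Icc_le_tauSum (t := t) (show s - 1 ≤ s by omega)
  have : NeZero (tauSum s t) := ⟨by omega⟩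
  have htop (z : Fin (tauSum s t) → ZMod (2 ^ s)) (hz : IsHadCol s t z) (q : Fin (tauSum s t))
      (hq : 1 + t (s - 1) ≤ q) : 2 ^ (s - 1) ∣ z q := by
    have hblock : blockIdx t (q + 1) = s := blockIdx_eq (by omega) (by omega) q.2
    simpa [hblock] using hz.pow_dvd (q := q) (by omega)
  rcases Nat.le_one_iff_eq_zero_or_eq_one.1 hlast with h0 | h0
  · refine isXorClosed_of_forall_dvd (k := s - 1) (by omega) {0}
      (fun z hz q hq => htop z hz q ?_) fun a b => ⟨fun _ => zxor (a 0) (b 0), fun z hz => ?_⟩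
    · simp only [mem_singleton, Fin.ext_iff, Fin.val_zero] at hq
      omega
    · simp [IsHadCol.apply_zero hz]
  · let r : Fin (tauSum s t) := ⟨1, by omega⟩
    have h0r : (0 : Fin (tauSum s t)) ≠ r := by simp [Fin.ext_iff, r]
    have hr (z : Fin (tauSum s t) → ZMod (2 ^ s)) (hz : IsHadCol s t z) : 2 ^ (s - 2) ∣ z r := by
      have hblock : blockIdx t (r + 1) = s - 1 :=
        blockIdx_eq (by omega) (by rw [show s - 1 - 1 = s - 2 by omega, hS₂]; simp [r]) (by
          simp [r]; omega)
      simpa [hblock, show s - 1 - 1 = s - 2 by omega] using hz.pow_dvd (q := r) le_rfl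
    refine isXorClosed_of_forall_dvd (k := s - 1) (by omega) {0, r}
      (fun z hz q hq => htop z hz q ?_) fun a b => ?_
    · simp only [mem_insert, mem_singleton, Fin.ext_iff, Fin.val_zero, r] at hq
      omega
    · obtain ⟨γ, δ, h⟩ := exists_zxor_add_mul_eq (k := s - 2) (by omega) (a 0) (b 0) (a r) (b r)
      refine ⟨fun q => if q = 0 then γ else δ, fun z hz => ?_⟩
      simp only [sum_pair h0r, IsHadCol.apply_zero hz, mul_one, if_neg h0r.symm]
      exact h (z r) (hr z hz)

end HadamardCode

theorem hadamardCode_linear_iff (s : ℕ) (hs : 2 < s) (t : ℕ → ℕ) (ht : 1 ≤ t 1) :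
    IsLinearCode (PhiMap s '' (hadamardCode s t : Set (ColIdx s t → ZMod (2^s)))) ↔
      (t 1 = 1 ∧ (∀ i, 2 ≤ i → i ≤ s - 2 → t i = 0) ∧ t (s - 1) ≤ 1) := by
  rw [isLinearCode_hadamardCode_iff (by omega)]
  refine ⟨fun h => ⟨?_, fun i hi2 his => ?_, ?_⟩,
    fun ⟨h1, hmid, hlast⟩ => isXorClosed_isHadCol hs h1 hmid hlast⟩
  · by_contra h1
    exact not_isXorClosed_isHadCol_of_le le_rfl (by omega) ht (by simp; omega) h
  · by_contra hi
    have hsum : t 1 + t i ≤ ∑ j ∈ Icc 1 i, t j := by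
      rw [← sum_pair (show 1 ≠ i by omega)]
      exact sum_le_sum_of_subset (by intro j; simp; omega)
    exact not_isXorClosed_isHadCol_of_le (i := i) (by omega) (by omega) (by omega) (by omega) h
  · by_contra hlast
    exact not_isXorClosed_isHadCol_of_two_le hs ht (by omega) h
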